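/- arXiv:1911.04087 — 2 statements merged into one kernel-verified Lean document; each statement's English description precedes it below -/
import Mathlib

section
/- Let τ ∈ 𝔻. Then there exist a compact set K ⊆ 𝔻 that is a neighborhood of τ (i.e., τ lies in the interior of K) and a constant c > 0 such that for every measurable set E ⊆ K and every z ∈ K one has Re(Pχ_E(z)) ≥ c·|E|, where |E| denotes the (normalized) measure of E and χ_E is the characteristic function of E. -/
open MeasureTheory Complex Set

noncomputable section

/-- The open unit disc in the complex plane. -/
def unitDisc : Set ℂ := {z : ℂ | ‖z‖ < 1}

/-- The normalized Lebesgue area measure on `ℂ` (Lebesgue measure divided by `π`). -/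
def areaD : Measure ℂ := (ENNReal.ofReal Real.pi)⁻¹ • volume

/-- The Bergman projection on the unit disc. -/
def bergmanP (f : ℂ → ℂ) (z : ℂ) : ℂ :=
  ∫ w in unitDisc, f w / (1 - (starRingEnd ℂ) w * z) ^ 2 ∂areaD

/-!
The Bergman kernel `(1 - w̄ z)⁻²` is continuous near the diagonal point `(τ, τ)`, where it equals
`(1 - |τ|²)⁻² > 0`. Hence its real part is bounded below by some `c > 0` for `z, w` in a small
closed disc `K` around `τ`, and integrating this bound over `E ⊆ K` gives `Re Pχ_E(z) ≥ c |E|`.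
-/

theorem isOpen_unitDisc : IsOpen unitDisc :=
  isOpen_lt continuous_norm continuous_const

theorem one_sub_conj_mul_ne_zero {z w : ℂ} (hz : z ∈ unitDisc) (hw : w ∈ unitDisc) :
    1 - (starRingEnd ℂ) w * z ≠ 0 := by
  have : ‖(starRingEnd ℂ) w * z‖ < 1 := by
    rw [norm_mul, Complex.norm_conj]
    exact mul_lt_one_of_nonneg_of_lt_one_left (norm_nonneg w) hw hz.le
  intro h
  rw [← sub_eq_zero.mp h, norm_one] at this
  exact lt_irrefl 1 this

def bergmanKernel (z w : ℂ) : ℂ := ((1 - (starRingEnd ℂ) w * z) ^ 2)⁻¹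

theorem continuousAt_bergmanKernel {z w : ℂ} (h : 1 - (starRingEnd ℂ) w * z ≠ 0) :
    ContinuousAt (fun p : ℂ × ℂ => bergmanKernel p.1 p.2) (z, w) := by
  unfold bergmanKernel
  exact ContinuousAt.inv₀ (by fun_prop) (pow_ne_zero 2 h)

theorem continuousOn_bergmanKernel {z : ℂ} (hz : z ∈ unitDisc) :
    ContinuousOn (bergmanKernel z) unitDisc := fun _ hw =>
  ((continuousAt_bergmanKernel (one_sub_conj_mul_ne_zero hz hw)).comp
    (Continuous.prodMk_right z).continuousAt).continuousWithinAt

theorem re_bergmanKernel_self_pos {τ : ℂ} (hτ : τ ∈ unitDisc) : 0 < (bergmanKernel τ τ).re := by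
  have hτ' : ‖τ‖ < 1 := hτ
  have hself : bergmanKernel τ τ = (((1 - ‖τ‖ ^ 2) ^ 2)⁻¹ : ℝ) := by
    rw [bergmanKernel, Complex.conj_mul']
    push_cast
    ring
  rw [hself, Complex.ofReal_re]
  have : 0 < 1 - ‖τ‖ ^ 2 := by nlinarith [norm_nonneg τ]
  positivity

theorem exists_closedBall_le_re_bergmanKernel {τ : ℂ} (hτ : τ ∈ unitDisc) :
    ∃ ε > 0, Metric.closedBall τ ε ⊆ unitDisc ∧ ∃ c > 0,
      ∀ z ∈ Metric.closedBall τ ε, ∀ w ∈ Metric.closedBall τ ε, c ≤ (bergmanKernel z w).re := by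
  set c := (bergmanKernel τ τ).re / 2
  have hc : 0 < c := half_pos (re_bergmanKernel_self_pos hτ)
  have hnear : ∀ᶠ p : ℂ × ℂ in nhds (τ, τ), p.1 ∈ unitDisc ∧ c < (bergmanKernel p.1 p.2).re :=
    (continuous_fst.continuousAt.eventually_mem (isOpen_unitDisc.mem_nhds hτ)).and
      ((Complex.continuous_re.continuousAt.comp
        (continuousAt_bergmanKernel (one_sub_conj_mul_ne_zero hτ hτ))).eventually
          (lt_mem_nhds (half_lt_self (re_bergmanKernel_self_pos hτ))))
  obtain ⟨r, hr, hball⟩ := Metric.eventually_nhds_iff_ball.mp hnear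
  have hsub : Metric.closedBall τ (r / 2) ⊆ Metric.ball τ r :=
    Metric.closedBall_subset_ball (half_lt_self hr)
  have hmem : ∀ z ∈ Metric.closedBall τ (r / 2), ∀ w ∈ Metric.closedBall τ (r / 2),
      (z, w) ∈ Metric.ball (τ, τ) r := fun z hz w hw => by
    rw [← ball_prod_same]
    exact ⟨hsub hz, hsub hw⟩
  refine ⟨r / 2, half_pos hr, fun z hz => (hball _ (hmem z hz z hz)).1, c, hc,
    fun z hz w hw => (hball _ (hmem z hz w hw)).2.le⟩

theorem bergmanP_indicator_one {E : Set ℂ} (hE : MeasurableSet E) (hED : E ⊆ unitDisc) (z : ℂ) :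
    bergmanP (E.indicator fun _ => (1 : ℂ)) z = ∫ w in E, bergmanKernel z w ∂areaD := by
  have hint : (fun w => E.indicator (fun _ => (1 : ℂ)) w / (1 - (starRingEnd ℂ) w * z) ^ 2)
      = E.indicator (bergmanKernel z) := by
    ext w
    by_cases hw : w ∈ E <;> simp [hw, bergmanKernel]
  rw [bergmanP, hint, setIntegral_indicator hE, inter_eq_self_of_subset_right hED]

instance isFiniteMeasureOnCompacts_areaD : IsFiniteMeasureOnCompacts areaD :=
  IsFiniteMeasureOnCompacts.smul volume (ENNReal.inv_ne_top.mpr (by positivity))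

theorem mul_toReal_le_re_setIntegral {α : Type*} [MeasurableSpace α] {μ : Measure α} {E : Set α}
    {g : α → ℂ} {c : ℝ} (hE : MeasurableSet E) (hμE : μ E ≠ ⊤) (hg : IntegrableOn g E μ)
    (hc : ∀ w ∈ E, c ≤ (g w).re) :
    c * (μ E).toReal ≤ (∫ w in E, g w ∂μ).re := by
  calc c * (μ E).toReal
      = ∫ _ in E, c ∂μ := by rw [setIntegral_const, smul_eq_mul, mul_comm, measureReal_def]
    _ ≤ ∫ w in E, (g w).re ∂μ :=
      setIntegral_mono_on (integrableOn_const hμE) hg.re hE hc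
    _ = (∫ w in E, g w ∂μ).re := integral_re hg

theorem bergman_lower_pointwise_bound (τ : ℂ) (hτ : τ ∈ unitDisc) :
    ∃ K : Set ℂ, K ⊆ unitDisc ∧ IsCompact K ∧ τ ∈ interior K ∧
      ∃ c : ℝ, 0 < c ∧
        ∀ E : Set ℂ, MeasurableSet E → E ⊆ K → ∀ z ∈ K,
          c * (areaD E).toReal ≤ (bergmanP (E.indicator fun _ => (1 : ℂ)) z).re := by
  obtain ⟨ε, hε, hKD, c, hc, hre⟩ := exists_closedBall_le_re_bergmanKernel hτ
  have hK : IsCompact (Metric.closedBall τ ε) := isCompact_closedBall τ ε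
  refine ⟨_, hKD, hK, ?_, c, hc, fun E hE hEK z hz => ?_⟩
  · rw [interior_closedBall τ hε.ne']
    exact Metric.mem_ball_self hε
  have hint : IntegrableOn (bergmanKernel z) E areaD :=
    (((continuousOn_bergmanKernel (hKD hz)).mono hKD).integrableOn_compact hK).mono_set hEK
  rw [bergmanP_indicator_one hE (hEK.trans hKD)]
  exact mul_toReal_le_re_setIntegral hE (hK.measure_lt_top.trans_le' (measure_mono hEK)).ne hint
    fun w hw => hre z hz w (hEK hw)
end
end

section
/- Let p : ℝ²₊ → [1,∞) be a measurable variable exponent with 1 < ess inf_{z∈ℝ²₊} p(z) and ess sup_{z∈ℝ²₊} p(z) < ∞. Suppose there is a constant C > 0 such that the modular inequality ∫_{ℝ²₊} |B_{ℝ²₊}f(z)|^{p(z)} dA(z) ≤ C ∫_{ℝ²₊} |f(z)|^{p(z)} dA(z) holds for every measurable f : ℝ²₊ → ℂ with ∫_{ℝ²₊} |f(z)|^{p(z)} dA(z) < ∞ and such that w ↦ f(w)/(z − w̄)² is Lebesgue integrable on ℝ²₊ for every z ∈ ℝ²₊. Then there exists a constant c such that p(z) = c for almost every z ∈ ℝ²₊.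 -/
/-!
If `p` is not a.e. constant, there are `α < β` such that `{p ≤ α}` and `{p ≥ β}` both have
positive measure. Near density points `z₀`, `z₁` of these sets the kernel `(z - w̄)⁻²` stays
within half its size of the nonzero value `(z₁ - z̄₀)⁻²`, so the test function `f = a · 𝟙_S`,
with `S ⊆ {p ≤ α}` near `z₀`, satisfies `|B f| ≳ a` on a set `T ⊆ {p ≥ β}` near `z₁`.
The modular inequality then gives `a ^ β ≲ a ^ α` for all large `a`, which is impossible.
-/

open MeasureTheory Complex Set

noncomputable section

/-- The open upper half-plane in `ℂ`. -/
def upperHalf : Set ℂ := {z : ℂ | 0 < z.im}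

/-- The Bergman-type projection on the upper half-plane. -/
def bergmanUHP (f : ℂ → ℂ) (z : ℂ) : ℂ :=
  (-(1 / (Real.pi : ℂ))) * ∫ w in upperHalf, f w / (z - (starRingEnd ℂ) w) ^ 2

open Filter ComplexConjugate

theorem exists_lt_measure_le_ne_zero_of_not_ae_eq_const {X : Type*} [MeasurableSpace X]
    {μ : Measure X} {f : X → ℝ} (hf : ¬∃ c : ℝ, ∀ᵐ x ∂μ, f x = c) :
    ∃ a b, a < b ∧ μ {x | f x ≤ a} ≠ 0 ∧ μ {x | b ≤ f x} ≠ 0 := by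
  contrapose! hf
  refine exists_eventuallyEq_const_of_forall_separating (· ∈ range (Iic : ℝ → Set ℝ)) ?_
  rintro _ ⟨q, rfl⟩
  simp only [ae_iff, mem_Iic, not_not]
  refine or_iff_not_imp_right.2 fun hq => measure_mono_null ?_ <|
    measure_iUnion_null fun n : ℕ => hf q (q + 1 / (n + 1)) (by simp; positivity) hq
  intro x hx
  obtain ⟨n, hn⟩ := exists_nat_one_div_lt (sub_pos.2 (not_le.1 hx))
  exact mem_iUnion.2 ⟨n, show q + 1 / (n + 1) ≤ f x by linarith⟩

theorem le_of_eventually_rpow_mul_le {α β m t K : ℝ} (hm : 0 < m) (ht : 0 < t)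
    (h : ∀ᶠ a in atTop, (a * m) ^ β * t ≤ K * a ^ α) : β ≤ α := by
  by_contra! hαβ
  have hlim : Tendsto (fun a => a ^ (β - α) * (m ^ β * t)) atTop atTop :=
    (tendsto_rpow_atTop (sub_pos.2 hαβ)).atTop_mul_const (by positivity)
  obtain ⟨a, ha, hKa, ha₀⟩ :=
    (h.and ((hlim.eventually_gt_atTop K).and (eventually_gt_atTop 0))).exists
  have hsplit : (a * m) ^ β * t = a ^ (β - α) * (m ^ β * t) * a ^ α := by
    rw [Real.mul_rpow ha₀.le hm.le, Real.rpow_sub ha₀]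
    field_simp
  have := mul_lt_mul_of_pos_right hKa (Real.rpow_pos_of_pos ha₀ α)
  linarith

theorem setLIntegral_ofReal_norm_indicator_rpow_le {X E : Type*} [MeasurableSpace X]
    [NormedAddCommGroup E] {μ : Measure X} {p : X → ℝ} {U S : Set X} (hS : MeasurableSet S)
    (hp : ∀ x ∈ U, p x ≠ 0) {α : ℝ} (hpS : ∀ x ∈ S, p x ≤ α) {c : E} (hc : 1 ≤ ‖c‖) :
    ∫⁻ x in U, ENNReal.ofReal (‖S.indicator (fun _ => c) x‖ ^ p x) ∂μ
      ≤ ENNReal.ofReal (‖c‖ ^ α) * μ S := by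
  calc ∫⁻ x in U, ENNReal.ofReal (‖S.indicator (fun _ => c) x‖ ^ p x) ∂μ
      ≤ ∫⁻ x in U, S.indicator (fun _ => ENNReal.ofReal (‖c‖ ^ α)) x ∂μ := by
        refine setLIntegral_mono (measurable_const.indicator hS) fun x hx => ?_
        by_cases hxS : x ∈ S
        · simpa [hxS] using ENNReal.ofReal_le_ofReal <|
            Real.rpow_le_rpow_of_exponent_le hc (hpS x hxS)
        · simp [hxS, Real.zero_rpow (hp x hx)]
    _ ≤ ∫⁻ x, S.indicator (fun _ => ENNReal.ofReal (‖c‖ ^ α)) x ∂μ :=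
        setLIntegral_le_lintegral _ _
    _ = ENNReal.ofReal (‖c‖ ^ α) * μ S := lintegral_indicator_const hS _

theorem ofReal_rpow_mul_le_setLIntegral {X : Type*} [MeasurableSpace X] {μ : Measure X}
    {p g : X → ℝ} {U T : Set X} (hT : MeasurableSet T) (hTU : T ⊆ U) {b β : ℝ} (hb : 1 ≤ b)
    (hpT : ∀ x ∈ T, β ≤ p x) (hp : ∀ x ∈ T, 0 ≤ p x) (hg : ∀ x ∈ T, b ≤ g x) :
    ENNReal.ofReal (b ^ β) * μ T ≤ ∫⁻ x in U, ENNReal.ofReal (g x ^ p x) ∂μ :=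
  calc ENNReal.ofReal (b ^ β) * μ T = ∫⁻ _ in T, ENNReal.ofReal (b ^ β) ∂μ :=
        (setLIntegral_const _ _).symm
    _ ≤ ∫⁻ x in T, ENNReal.ofReal (g x ^ p x) ∂μ :=
        setLIntegral_mono' hT fun x hx => ENNReal.ofReal_le_ofReal <|
          (Real.rpow_le_rpow_of_exponent_le hb (hpT x hx)).trans <|
            Real.rpow_le_rpow (by linarith) (hg x hx) (hp x hx)
    _ ≤ ∫⁻ x in U, ENNReal.ofReal (g x ^ p x) ∂μ := lintegral_mono_set hTU

theorem mul_measureReal_le_norm_setIntegral {X E : Type*} [MeasurableSpace X]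
    [NormedAddCommGroup E] [NormedSpace ℝ E] [CompleteSpace E] {μ : Measure X} {s : Set X}
    {g : X → E} {c : E} {ε : ℝ} (hs : μ s ≠ ⊤) (hg : IntegrableOn g s μ)
    (hgc : ∀ x ∈ s, ‖g x - c‖ ≤ ε) :
    (‖c‖ - ε) * μ.real s ≤ ‖∫ x in s, g x ∂μ‖ := by
  have hdev : ‖∫ x in s, (g x - c) ∂μ‖ ≤ ε * μ.real s :=
    norm_setIntegral_le_of_norm_le_const hs.lt_top hgc
  rw [integral_sub hg (integrableOn_const hs), setIntegral_const, norm_sub_rev] at hdev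
  have := norm_sub_norm_le (μ.real s • c) (∫ x in s, g x ∂μ)
  rw [norm_smul, Real.norm_of_nonneg measureReal_nonneg] at this
  linarith

theorem measurableSet_upperHalf : MeasurableSet upperHalf :=
  measurableSet_lt measurable_const measurable_im

theorem im_le_norm_sub_conj {z w : ℂ} (hw : w ∈ upperHalf) : z.im ≤ ‖z - conj w‖ := by
  have hw : 0 < w.im := hw
  calc z.im ≤ |(z - conj w).im| := by
        rw [sub_im, conj_im]
        exact le_abs.2 (Or.inl (by linarith))
    _ ≤ ‖z - conj w‖ := abs_im_le_norm _

theorem norm_inv_sub_conj_sq_le {z w : ℂ} (hz : z ∈ upperHalf) (hw : w ∈ upperHalf) :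
    ‖((z - conj w) ^ 2)⁻¹‖ ≤ (z.im ^ 2)⁻¹ := by
  have hz : 0 < z.im := hz
  rw [norm_inv, norm_pow]
  exact inv_anti₀ (by positivity) (pow_le_pow_left₀ hz.le (im_le_norm_sub_conj hw) 2)

theorem sub_conj_ne_zero {z w : ℂ} (hz : z ∈ upperHalf) (hw : w ∈ upperHalf) :
    z - conj w ≠ 0 :=
  norm_pos_iff.1 <| lt_of_lt_of_le hz (im_le_norm_sub_conj hw)

theorem indicator_const_div_sub_conj_sq (S : Set ℂ) (c z : ℂ) :
    (fun w => S.indicator (fun _ => c) w / (z - conj w) ^ 2)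
      = S.indicator fun w => c * ((z - conj w) ^ 2)⁻¹ := by
  ext w
  by_cases hw : w ∈ S <;> simp [hw, div_eq_mul_inv]

section

variable {S : Set ℂ}

theorem integrableOn_inv_sub_conj_sq (hS : MeasurableSet S) (hSU : S ⊆ upperHalf)
    (hSfin : volume S ≠ ⊤) {z : ℂ} (hz : z ∈ upperHalf) :
    IntegrableOn (fun w => ((z - conj w) ^ 2)⁻¹) S :=
  Measure.integrableOn_of_bounded hSfin (by fun_prop) <|
    (ae_restrict_iff' hS).2 <| .of_forall fun _ hw => norm_inv_sub_conj_sq_le hz (hSU hw)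

theorem integrableOn_indicator_const_div_sub_conj_sq (hS : MeasurableSet S)
    (hSU : S ⊆ upperHalf) (hSfin : volume S ≠ ⊤) (c : ℂ) {z : ℂ} (hz : z ∈ upperHalf) :
    IntegrableOn (fun w => S.indicator (fun _ => c) w / (z - conj w) ^ 2) upperHalf := by
  rw [indicator_const_div_sub_conj_sq]
  exact ((integrable_indicator_iff hS).2
    ((integrableOn_inv_sub_conj_sq hS hSU hSfin hz).const_mul c)).integrableOn

theorem bergmanUHP_indicator_const (hS : MeasurableSet S) (hSU : S ⊆ upperHalf) (c z : ℂ) :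
    bergmanUHP (S.indicator fun _ => c) z
      = -(c / Real.pi) * ∫ w in S, ((z - conj w) ^ 2)⁻¹ := by
  rw [bergmanUHP, indicator_const_div_sub_conj_sq, setIntegral_indicator hS,
    inter_eq_right.2 hSU, integral_const_mul]
  ring

theorem mul_le_norm_bergmanUHP_indicator (hS : MeasurableSet S) (hSU : S ⊆ upperHalf)
    (hSfin : volume S ≠ ⊤) {z κ : ℂ} (hz : z ∈ upperHalf)
    (hκ : ∀ w ∈ S, ‖((z - conj w) ^ 2)⁻¹ - κ‖ ≤ ‖κ‖ / 2) {a : ℝ} (ha : 0 ≤ a) :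
    a * (‖κ‖ * volume.real S / (2 * Real.pi))
      ≤ ‖bergmanUHP (S.indicator fun _ => (a : ℂ)) z‖ := by
  have hint := mul_measureReal_le_norm_setIntegral hSfin
    (integrableOn_inv_sub_conj_sq hS hSU hSfin hz) hκ
  rw [bergmanUHP_indicator_const hS hSU, norm_mul, norm_neg, norm_div, norm_real,
    Real.norm_of_nonneg ha, norm_real, Real.norm_of_nonneg Real.pi_pos.le]
  calc a * (‖κ‖ * volume.real S / (2 * Real.pi))
      = a / Real.pi * ((‖κ‖ - ‖κ‖ / 2) * volume.real S) := by ring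
    _ ≤ _ := by gcongr

end

theorem exists_ball_norm_inv_sub_conj_sq_sub_le {z₀ z₁ : ℂ} (hz₀ : z₀ ∈ upperHalf)
    (hz₁ : z₁ ∈ upperHalf) : ∃ r > 0, ∀ z ∈ Metric.ball z₁ r, ∀ w ∈ Metric.ball z₀ r,
      ‖((z - conj w) ^ 2)⁻¹ - ((z₁ - conj z₀) ^ 2)⁻¹‖ ≤ ‖((z₁ - conj z₀) ^ 2)⁻¹‖ / 2 := by
  have hne := sub_conj_ne_zero hz₁ hz₀
  have hcont : ContinuousAt (fun q : ℂ × ℂ => ((q.1 - conj q.2) ^ 2)⁻¹) (z₁, z₀) :=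
    (by fun_prop : Continuous fun q : ℂ × ℂ => (q.1 - conj q.2) ^ 2).continuousAt.inv₀
      (pow_ne_zero 2 hne)
  obtain ⟨r, hr, hball⟩ := Metric.continuousAt_iff.1 hcont _
    (half_pos (norm_pos_iff.2 (inv_ne_zero (pow_ne_zero 2 hne))))
  refine ⟨r, hr, fun z hz w hw => ?_⟩
  rw [← dist_eq_norm]
  exact (hball (x := (z, w)) (by rw [Prod.dist_eq]; exact max_lt hz hw)).le

def BergmanModularInequality (p : ℂ → ℝ) (C : ℝ) : Prop :=
  ∀ f : ℂ → ℂ, Measurable f →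
    (∫⁻ z in upperHalf, ENNReal.ofReal (‖f z‖ ^ p z)) < ⊤ →
    (∀ z ∈ upperHalf, IntegrableOn (fun w => f w / (z - conj w) ^ 2) upperHalf) →
    (∫⁻ z in upperHalf, ENNReal.ofReal (‖bergmanUHP f z‖ ^ p z))
      ≤ ENNReal.ofReal C * ∫⁻ z in upperHalf, ENNReal.ofReal (‖f z‖ ^ p z)

theorem BergmanModularInequality.rpow_mul_measureReal_le {p : ℂ → ℝ} {C : ℝ}
    (hmod : BergmanModularInequality p C) (hC : 0 ≤ C) (hp : ∀ z ∈ upperHalf, 1 ≤ p z)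
    {S T : Set ℂ} (hS : MeasurableSet S) (hT : MeasurableSet T) (hSU : S ⊆ upperHalf)
    (hTU : T ⊆ upperHalf) (hSfin : volume S ≠ ⊤) {α β : ℝ}
    (hpS : ∀ z ∈ S, p z ≤ α) (hpT : ∀ z ∈ T, β ≤ p z) {κ : ℂ}
    (hκ : ∀ z ∈ T, ∀ w ∈ S, ‖((z - conj w) ^ 2)⁻¹ - κ‖ ≤ ‖κ‖ / 2) {a : ℝ} (ha : 1 ≤ a)
    (ham : 1 ≤ a * (‖κ‖ * volume.real S / (2 * Real.pi))) :
    (a * (‖κ‖ * volume.real S / (2 * Real.pi))) ^ β * volume.real T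
      ≤ C * volume.real S * a ^ α := by
  set m := ‖κ‖ * volume.real S / (2 * Real.pi)
  set f : ℂ → ℂ := S.indicator fun _ => (a : ℂ)
  have hnorm : ‖(a : ℂ)‖ = a := by rw [norm_real, Real.norm_of_nonneg (by linarith)]
  have hf : ∫⁻ z in upperHalf, ENNReal.ofReal (‖f z‖ ^ p z)
      ≤ ENNReal.ofReal (a ^ α) * volume S := by
    have := setLIntegral_ofReal_norm_indicator_rpow_le (μ := volume) hS
      (fun z hz => (zero_lt_one.trans_le (hp z hz)).ne') hpS (hnorm.symm ▸ ha)
    rwa [hnorm] at this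
  have hBf : ENNReal.ofReal ((a * m) ^ β) * volume T
      ≤ ∫⁻ z in upperHalf, ENNReal.ofReal (‖bergmanUHP f z‖ ^ p z) :=
    ofReal_rpow_mul_le_setLIntegral hT hTU ham hpT
      (fun z hz => zero_le_one.trans (hp z (hTU hz))) fun z hz =>
        mul_le_norm_bergmanUHP_indicator hS hSU hSfin (hTU hz) (hκ z hz) (by linarith)
  have key : ENNReal.ofReal ((a * m) ^ β) * volume T
      ≤ ENNReal.ofReal C * (ENNReal.ofReal (a ^ α) * volume S) :=
    hBf.trans <| (hmod f (measurable_const.indicator hS) (hf.trans_lt (by finiteness))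
      fun z hz => integrableOn_indicator_const_div_sub_conj_sq hS hSU hSfin _ hz).trans
        (by gcongr)
  have := ENNReal.toReal_mono (by finiteness) key
  rw [ENNReal.toReal_mul, ENNReal.toReal_mul, ENNReal.toReal_mul, ENNReal.toReal_ofReal
    (by positivity), ENNReal.toReal_ofReal hC, ENNReal.toReal_ofReal (by positivity)] at this
  simp only [measureReal_def]
  linarith

theorem BergmanModularInequality.le_of_measure_ne_zero {p : ℂ → ℝ} {C : ℝ}
    (hmod : BergmanModularInequality p C) (hC : 0 ≤ C) (hpm : Measurable p)
    (hp : ∀ z ∈ upperHalf, 1 ≤ p z) {α β : ℝ} (hA : volume ({z | p z ≤ α} ∩ upperHalf) ≠ 0)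
    (hB : volume ({z | β ≤ p z} ∩ upperHalf) ≠ 0) : β ≤ α := by
  obtain ⟨z₀, hz₀, hA₀⟩ := exists_mem_forall_mem_nhdsWithin_pos_measure hA
  obtain ⟨z₁, hz₁, hB₁⟩ := exists_mem_forall_mem_nhdsWithin_pos_measure hB
  obtain ⟨r, hr, hκ⟩ := exists_ball_norm_inv_sub_conj_sq_sub_le hz₀.2 hz₁.2
  set S := {z | p z ≤ α} ∩ upperHalf ∩ Metric.ball z₀ r
  set T := {z | β ≤ p z} ∩ upperHalf ∩ Metric.ball z₁ r
  set m := ‖((z₁ - conj z₀) ^ 2)⁻¹‖ * volume.real S / (2 * Real.pi)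
  have hSfin : volume S ≠ ⊤ :=
    ((measure_mono inter_subset_right).trans_lt measure_ball_lt_top).ne
  have hTfin : volume T ≠ ⊤ :=
    ((measure_mono inter_subset_right).trans_lt measure_ball_lt_top).ne
  have hS : 0 < volume.real S := ENNReal.toReal_pos
    (hA₀ _ (inter_mem_nhdsWithin _ (Metric.ball_mem_nhds z₀ hr))).ne' hSfin
  have hT : 0 < volume.real T := ENNReal.toReal_pos
    (hB₁ _ (inter_mem_nhdsWithin _ (Metric.ball_mem_nhds z₁ hr))).ne' hTfin
  have hm : 0 < m := by
    have := norm_pos_iff.2 <| inv_ne_zero <| pow_ne_zero 2 <| sub_conj_ne_zero hz₁.2 hz₀.2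
    positivity
  refine le_of_eventually_rpow_mul_le hm hT (K := C * volume.real S) ?_
  filter_upwards [eventually_ge_atTop 1, eventually_ge_atTop m⁻¹] with a ha ham
  exact hmod.rpow_mul_measureReal_le hC hp
    (((measurableSet_le hpm measurable_const).inter measurableSet_upperHalf).inter
      measurableSet_ball)
    (((measurableSet_le measurable_const hpm).inter measurableSet_upperHalf).inter
      measurableSet_ball)
    (fun _ hz => hz.1.2) (fun _ hz => hz.1.2) hSfin (fun _ hz => hz.1.1)
    (fun _ hz => hz.1.1) (fun z hz w hw => hκ z hz.2 w hw.2) ha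
    ((inv_le_iff_one_le_mul₀ hm).1 ham)

theorem modular_inequality_bergmanUHP_implies_constant_exponent_general
    (p : ℂ → ℝ) (hpm : Measurable p)
    (hp1 : ∀ z ∈ upperHalf, 1 ≤ p z)
    (C : ℝ) (hC : 0 < C)
    (hmod : ∀ f : ℂ → ℂ, Measurable f →
      (∫⁻ z in upperHalf, ENNReal.ofReal (‖f z‖ ^ p z)) < ⊤ →
      (∀ z ∈ upperHalf,
        IntegrableOn (fun w => f w / (z - (starRingEnd ℂ) w) ^ 2) upperHalf) →
      (∫⁻ z in upperHalf, ENNReal.ofReal (‖bergmanUHP f z‖ ^ p z))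
        ≤ ENNReal.ofReal C *
          ∫⁻ z in upperHalf, ENNReal.ofReal (‖f z‖ ^ p z)) :
    ∃ c : ℝ, ∀ᵐ z ∂(volume.restrict upperHalf), p z = c := by
  by_contra hconst
  obtain ⟨α, β, hαβ, hA, hB⟩ := exists_lt_measure_le_ne_zero_of_not_ae_eq_const hconst
  rw [Measure.restrict_apply' measurableSet_upperHalf] at hA hB
  exact hαβ.not_ge (BergmanModularInequality.le_of_measure_ne_zero hmod hC.le hpm hp1 hA hB)

theorem modular_inequality_bergmanUHP_implies_constant_exponent
    (p : ℂ → ℝ) (hpm : Measurable p)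
    (hp1 : ∀ z ∈ upperHalf, 1 ≤ p z)
    (hinf : 1 < essInf p (volume.restrict upperHalf))
    (hsup : ∃ M : ℝ, ∀ᵐ z ∂(volume.restrict upperHalf), p z ≤ M)
    (C : ℝ) (hC : 0 < C)
    (hmod : ∀ f : ℂ → ℂ, Measurable f →
      (∫⁻ z in upperHalf, ENNReal.ofReal (‖f z‖ ^ p z)) < ⊤ →
      (∀ z ∈ upperHalf,
        IntegrableOn (fun w => f w / (z - (starRingEnd ℂ) w) ^ 2) upperHalf) →
      (∫⁻ z in upperHalf, ENNReal.ofReal (‖bergmanUHP f z‖ ^ p z))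
        ≤ ENNReal.ofReal C *
          ∫⁻ z in upperHalf, ENNReal.ofReal (‖f z‖ ^ p z)) :
    ∃ c : ℝ, ∀ᵐ z ∂(volume.restrict upperHalf), p z = c :=
  modular_inequality_bergmanUHP_implies_constant_exponent_general p hpm hp1 C hC hmod

end
end
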